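/- More generally, for any a ∈ ℝ, the map J on V × ℝ defined by J(X, t) = (φ(X) - (a η(X) + t)ξ, a t + (1+a²) η(X)) satisfies J² = -id. -/
import Mathlib

/-- For an almost contact structure `(φ, ξ, η)` on `V` and any `a ∈ ℝ`, the map
`J(X,t) = (φX - (aηX + t)ξ, at + (1+a²)ηX)` on `V × ℝ` satisfies `J² = -id`. -/
theorem stmt16 {V : Type*} [AddCommGroup V] [Module ℝ V]
    (ξ : V) (η : V →ₗ[ℝ] ℝ) (φ : V →ₗ[ℝ] V)
    (hηξ : η ξ = 1) (hφ2 : ∀ X, φ (φ X) = -X + η X • ξ)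
    (hφξ : φ ξ = 0) (hηφ : ∀ X, η (φ X) = 0) (a : ℝ) :
    ∀ p : V × ℝ,
      (fun q : V × ℝ => (φ q.1 - (a * η q.1 + q.2) • ξ, a * q.2 + (1 + a ^ 2) * η q.1))
        ((fun q : V × ℝ =>
          (φ q.1 - (a * η q.1 + q.2) • ξ, a * q.2 + (1 + a ^ 2) * η q.1)) p) = -p := by
  rintro ⟨X, t⟩
  simp only [Prod.mk.injEq, Prod.neg_mk, map_sub, map_smul, map_add, hφ2, hφξ, hηφ, hηξ,
    smul_eq_mul]
  constructor
  · rw [smul_zero]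
    module
  · ring
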